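/- arXiv:2404.02770 — 3 statements merged into one kernel-verified Lean document; each statement's English description precedes it below -/
import Mathlib

section
/- Let M > 0, x ∈ [−M, M], and y ∈ [0, M − x]. Then for every positive integer r, sign(x+y)·|x+y|^((r-1)/r) ≥ sign(x)·|x|^((r-1)/r) + ((r−1)/r)·M^(−1/r)·y. -/
/-!
For `0 < p ≤ 1` the signed power `⌈t⌋^p` has derivative `p |t|^(p-1) ≥ p M^(p-1)` on
`[-M, M] \ {0}`, so `t ↦ ⌈t⌋^p - p M^(p-1) t` is monotone on `[-M, M]`: on `[0, M]` by the
mean value theorem, on `[-M, 0]` because the function is odd. For `p = (r-1)/r` we have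
`p - 1 = -1/r`, and the inequality compares the values at `x ≤ x + y`. For `r = 1` the
signed power is `sign`, which is monotone.
-/

/-- Signed power: `⌈y⌋^p = |y|^p * sign y`. -/
noncomputable def spow (p : ℝ) (y : ℝ) : ℝ := |y| ^ p * Real.sign y

lemma spow_of_nonneg {p t : ℝ} (hp : 0 < p) (ht : 0 ≤ t) : spow p t = t ^ p := by
  rcases ht.eq_or_lt with rfl | h
  · simp [spow, Real.zero_rpow hp.ne']
  · simp [spow, Real.sign_of_pos h, abs_of_pos h]

lemma spow_neg (p t : ℝ) : spow p (-t) = -spow p t := by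
  simp [spow, Real.sign_neg]

lemma spow_zero_left : spow 0 = Real.sign := by
  ext t
  simp [spow]

lemma Real.sign_monotone : Monotone Real.sign := by
  intro a b hab
  rcases lt_trichotomy a 0 with ha | rfl | ha
  · rw [Real.sign_of_neg ha]
    rcases Real.sign_apply_eq b with h | h | h <;> rw [h] <;> norm_num
  · rcases hab.eq_or_lt with rfl | hb
    · exact le_rfl
    · simp [Real.sign_of_pos hb]
  · rw [Real.sign_of_pos ha, Real.sign_of_pos (ha.trans_le hab)]

lemma monotoneOn_rpow_sub_mul {p M : ℝ} (hp : 0 < p) (hp1 : p ≤ 1) :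
    MonotoneOn (fun t : ℝ => t ^ p - p * M ^ (p - 1) * t) (Set.Icc 0 M) := by
  have hderiv : ∀ t : ℝ, 0 < t →
      HasDerivAt (fun t : ℝ => t ^ p - p * M ^ (p - 1) * t)
        (p * t ^ (p - 1) - p * M ^ (p - 1) * 1) t := fun t ht =>
    (Real.hasDerivAt_rpow_const (Or.inl ht.ne')).sub ((hasDerivAt_id t).const_mul _)
  apply monotoneOn_of_deriv_nonneg (convex_Icc 0 M)
  · exact (continuousOn_id.rpow_const fun _ _ => Or.inr hp.le).sub (by fun_prop)
  · rw [interior_Icc]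
    exact fun t ht => (hderiv t ht.1).differentiableAt.differentiableWithinAt
  · rw [interior_Icc]
    intro t ht
    rw [(hderiv t ht.1).deriv, mul_one, sub_nonneg]
    have : M ^ (p - 1) ≤ t ^ (p - 1) := Real.rpow_le_rpow_of_nonpos ht.1 ht.2.le (by linarith)
    gcongr

lemma monotoneOn_spow_sub_mul {p M : ℝ} (hp : 0 ≤ p) (hp1 : p ≤ 1) (hM : 0 ≤ M) :
    MonotoneOn (fun t : ℝ => spow p t - p * M ^ (p - 1) * t) (Set.Icc (-M) M) := by
  rcases hp.eq_or_lt with rfl | hp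
  · simpa [spow_zero_left] using Real.sign_monotone.monotoneOn _
  have hpos : MonotoneOn (fun t : ℝ => spow p t - p * M ^ (p - 1) * t) (Set.Icc 0 M) := by
    refine (monotoneOn_rpow_sub_mul hp hp1).congr fun t ht => ?_
    simp only [spow_of_nonneg hp ht.1]
  have hneg : MonotoneOn (fun t : ℝ => spow p t - p * M ^ (p - 1) * t) (Set.Icc (-M) 0) := by
    intro a ha b hb hab
    have := hpos ⟨neg_nonneg.2 hb.2, neg_le.1 hb.1⟩ ⟨neg_nonneg.2 ha.2, neg_le.1 ha.1⟩
      (neg_le_neg hab)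
    simp only [spow_neg] at this
    linarith
  rw [← Set.Icc_union_Icc_eq_Icc (neg_nonpos.2 hM) hM]
  exact hneg.union_right hpos (isGreatest_Icc (neg_nonpos.2 hM)) (isLeast_Icc hM)

theorem stmt1 (M x y : ℝ) (hM : 0 < M) (hx : x ∈ Set.Icc (-M) M)
    (hy : y ∈ Set.Icc (0 : ℝ) (M - x)) (r : ℕ) (hr : 0 < r) :
    spow (((r : ℝ) - 1) / r) x + ((r : ℝ) - 1) / r * M ^ (-(1 : ℝ) / r) * y
      ≤ spow (((r : ℝ) - 1) / r) (x + y) := by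
  have hr0 : (0 : ℝ) < r := Nat.cast_pos.2 hr
  have hr1 : (1 : ℝ) ≤ r := Nat.one_le_cast.2 hr
  have hp0 : 0 ≤ ((r : ℝ) - 1) / r := div_nonneg (by linarith) hr0.le
  have hp1 : ((r : ℝ) - 1) / r ≤ 1 := (div_le_one hr0).2 (by linarith)
  have hexp : ((r : ℝ) - 1) / r - 1 = -(1 : ℝ) / r := by field_simp; ring
  have hmono := monotoneOn_spow_sub_mul hp0 hp1 hM.le hx
    ⟨by linarith [hx.1, hy.1], by linarith [hy.2]⟩ (le_add_of_nonneg_right hy.1)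
  simp only [hexp] at hmono
  linarith
end

section
/- Let m ∈ ℕ, M ≥ 0, T > 0, and f(t) = M·t^{m+1}/(m+1)!. With divided differences g_{i,k} and coefficients c_{i,j} as in the recursion c_{i,j} = ((j−1)c_{i,j−1} + i·c_{i−1,j−1})/j (c_{0,0}=1, zero otherwise on boundary), equality |f^{(i)}(kT) − Σ_{j=i}^{m} T^{j−i}c_{i,j}g_{j+1,k+1}| = c_{i,m+1}·M·T^{m+1−i} holds for all k ≥ m and i = 1,…,m. -/
/-- Output coefficients of the implicit robust exact differentiator. -/
noncomputable def ired_c : ℕ → ℕ → ℝ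
  | 0, 0 => 1
  | 0, _ + 1 => 0
  | _ + 1, 0 => 0
  | i + 1, j + 1 => ((j : ℝ) * ired_c (i + 1) j + ((i : ℝ) + 1) * ired_c i j) / ((j : ℝ) + 1)

/-!
The IRED coefficients are `c i j = (-1)^(i+j) * i!/j! * [s^i] s(s-1)⋯(s-j+1)`. Newton's forward
interpolation formula `p (x + s h) = ∑ j, (s choose j) Δ_h^j p x`, exact for a polynomial `p` of
degree `≤ B` when `j` runs up to `B`, is an identity of polynomials in `s`; comparing the
coefficients of `s^i` (with `h = -T`) gives `T^i p⁽ⁱ⁾ x = ∑_{j ≤ B} c i j ∇_T^j p x`, where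
`∇_T f x = f x - f (x - T)`. For the monomial signal of degree `m + 1` the divided differences are
`g (j+1) (k+1) = ∇_T^j f (kT) / T^j`, so the IRED output misses exactly the term `j = m + 1`, and
`∇_T^(m+1) f = T^(m+1) f⁽ᵐ⁺¹⁾ = M T^(m+1)`.
-/

open Finset Polynomial fwdDiff
open scoped Nat

lemma fwdDiff_iter_comp_mul_add {R G : Type*} [CommRing R] [AddCommGroup G] (f : R → G)
    (a b : R) (n : ℕ) (s : R) :
    Δ_[1] ^[n] (fun s => f (a * s + b)) s = Δ_[a] ^[n] f (a * s + b) := by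
  simp [fwdDiff_iter_eq_sum_shift, mul_add, add_right_comm, mul_comm]

section NewtonInterpolation

variable {K : Type*} [Field K] [CharZero K]

theorem Polynomial.eq_sum_fwdDiff_iter_mul_descPochhammer (q : K[X]) {B : ℕ}
    (hB : q.natDegree ≤ B) :
    q = ∑ j ∈ range (B + 1), C (Δ_[1] ^[j] q.eval 0 / j !) * descPochhammer K j := by
  rw [← sub_eq_zero]
  refine eq_zero_of_infinite_isRoot _
    (Set.infinite_range_of_injective Nat.cast_injective |>.mono ?_)
  rintro _ ⟨n, rfl⟩
  have hnewton := shift_eq_sum_fwdDiff_iter (1 : K) q.eval n 0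
  simp only [nsmul_eq_mul, mul_one, zero_add] at hnewton
  simp only [Set.mem_ofPred_eq, IsRoot, eval_sub, eval_finsetSum, eval_mul, eval_C,
    descPochhammer_eval_eq_descFactorial, Nat.descFactorial_eq_factorial_mul_choose, hnewton,
    sub_eq_zero]
  have hterm (N : ℕ) : ∑ j ∈ range N, Δ_[1] ^[j] q.eval 0 / j ! * ↑(j ! * n.choose j) =
      ∑ j ∈ range N, n.choose j * Δ_[1] ^[j] q.eval 0 :=
    sum_congr rfl fun j _ => by
      have : (j ! : K) ≠ 0 := Nat.cast_ne_zero.2 j.factorial_ne_zero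
      push_cast
      field_simp
  rw [hterm]
  calc _ = ∑ j ∈ range (n + B + 1), n.choose j * Δ_[1] ^[j] q.eval 0 :=
        sum_subset (range_subset_range.2 (by omega)) fun j _ hj => by
          rw [Nat.choose_eq_zero_of_lt (by simpa using hj), Nat.cast_zero, zero_mul]
    _ = _ := (sum_subset (range_subset_range.2 (by omega)) fun j _ hj => by
          rw [fwdDiff_iter_eq_zero_of_degree_lt (hB.trans_lt (by simpa using hj)),
            Pi.zero_apply, mul_zero]).symm

theorem Polynomial.pow_mul_hasseDeriv_eval_eq_sum_fwdDiff_iter (p : K[X]) {B : ℕ}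
    (hB : p.natDegree ≤ B) (x h : K) (i : ℕ) :
    h ^ i * (hasseDeriv i p).eval x =
      ∑ j ∈ range (B + 1), (descPochhammer K j).coeff i / j ! * Δ_[h] ^[j] p.eval x := by
  set q := (taylor x p).comp (C h * X)
  have hq_eval : q.eval = fun s => p.eval (h * s + x) := by
    funext s
    simp [q, eval_comp, taylor_eval]
  have hq_deg : q.natDegree ≤ B := by
    refine natDegree_comp_le.trans ?_
    rw [natDegree_taylor]
    simpa using Nat.mul_le_mul hB ((natDegree_C_mul_le h X).trans natDegree_X_le)
  have hcoeff := congrArg (coeff · i) (q.eq_sum_fwdDiff_iter_mul_descPochhammer hq_deg)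
  simp only [q, comp_C_mul_X_coeff, taylor_coeff, finsetSum_coeff, coeff_C_mul, hq_eval]
    at hcoeff
  rw [mul_comm, hcoeff]
  refine sum_congr rfl fun j _ => ?_
  rw [fwdDiff_iter_comp_mul_add p.eval, mul_zero, zero_add]
  ring

end NewtonInterpolation

def bwdDiff {M G : Type*} [AddCommGroup M] [AddCommGroup G] (h : M) (f : M → G) : M → G :=
  fun x => f x - f (x - h)

lemma bwdDiff_iter_eq_neg_one_pow_smul_fwdDiff_iter {M G : Type*} [AddCommGroup M]
    [AddCommGroup G] (h : M) (f : M → G) (n : ℕ) :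
    (bwdDiff h)^[n] f = (-1 : ℤ) ^ n • Δ_[-h] ^[n] f := by
  induction n with
  | zero => simp
  | succ n ih =>
    have hstep (g : M → G) : bwdDiff h g = -Δ_[-h] g := by
      funext x
      simp [bwdDiff, fwdDiff, sub_eq_add_neg]
    rw [Function.iterate_succ_apply', ih, hstep, fwdDiff_const_smul,
      Function.iterate_succ_apply', pow_succ, mul_neg_one, neg_smul]

lemma Polynomial.iteratedDeriv_eval {𝕜 : Type*} [NontriviallyNormedField 𝕜] (p : 𝕜[X])
    (n : ℕ) : iteratedDeriv n p.eval = (derivative^[n] p).eval := by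
  induction n with
  | zero => simp
  | succ n ih =>
    funext x
    rw [iteratedDeriv_succ, ih, Polynomial.deriv, Function.iterate_succ_apply']

-- Equivalently `c i j = i!/j! * |s(j, i)|`, with `s` the Stirling numbers of the first kind.
lemma ired_c_eq_coeff_descPochhammer (i j : ℕ) :
    ired_c i j = (-1) ^ (i + j) * (i ! / j !) * (descPochhammer ℝ j).coeff i := by
  induction j generalizing i with
  | zero => cases i <;> simp [ired_c, coeff_one]
  | succ j ih =>
    cases i with
    | zero => simp [ired_c, coeff_zero_eq_eval_zero]
    | succ i =>
      rw [ired_c, ih, ih, descPochhammer_succ_right, mul_sub, coeff_sub, coeff_mul_X,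
        coeff_mul_natCast]
      push_cast [Nat.factorial_succ]
      field_simp
      ring

lemma ired_c_of_lt {i j : ℕ} (h : j < i) : ired_c i j = 0 := by
  rw [ired_c_eq_coeff_descPochhammer, coeff_eq_zero_of_natDegree_lt, mul_zero]
  rwa [descPochhammer_natDegree]

lemma ired_c_self (n : ℕ) : ired_c n n = 1 := by
  have hmonic := (monic_descPochhammer ℝ n).coeff_natDegree
  rw [descPochhammer_natDegree] at hmonic
  rw [ired_c_eq_coeff_descPochhammer, hmonic, ← two_mul, pow_mul]
  simp [Nat.factorial_ne_zero]

lemma ired_c_nonneg (i j : ℕ) : 0 ≤ ired_c i j := by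
  induction j generalizing i with
  | zero => cases i <;> simp [ired_c]
  | succ j ih =>
    cases i with
    | zero => simp [ired_c]
    | succ i =>
      have := ih i
      have := ih (i + 1)
      rw [ired_c]
      positivity

theorem Polynomial.pow_mul_iteratedDeriv_eq_sum_ired_c_mul_bwdDiff_iter (p : ℝ[X]) {B : ℕ}
    (hB : p.natDegree ≤ B) (T x : ℝ) (i : ℕ) :
    T ^ i * iteratedDeriv i p.eval x =
      ∑ j ∈ range (B + 1), ired_c i j * (bwdDiff T)^[j] p.eval x := by
  have hsign (n : ℕ) : ((-1 : ℝ) ^ n) * (-1) ^ n = 1 := by rw [← mul_pow]; norm_num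
  simp only [p.iteratedDeriv_eval, ← factorial_smul_hasseDeriv, LinearMap.smul_apply]
  rw [eval_smul, nsmul_eq_mul]
  calc T ^ i * (i ! * (hasseDeriv i p).eval x)
      = (-1) ^ i * i ! * ((-T) ^ i * (hasseDeriv i p).eval x) := by
        rw [neg_pow]
        linear_combination (-(T ^ i * i ! * (hasseDeriv i p).eval x)) * hsign i
    _ = _ := by
      rw [p.pow_mul_hasseDeriv_eval_eq_sum_fwdDiff_iter hB x (-T) i, mul_sum]
      refine sum_congr rfl fun j _ => ?_
      rw [bwdDiff_iter_eq_neg_one_pow_smul_fwdDiff_iter, ired_c_eq_coeff_descPochhammer,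
        Pi.smul_apply, zsmul_eq_mul, pow_add]
      push_cast
      linear_combination (-(-1) ^ i * (i ! / j ! * (descPochhammer ℝ j).coeff i
        * Δ_[-T] ^[j] p.eval x)) * hsign j

theorem Polynomial.pow_mul_iteratedDeriv_sub_sum_ired_c_mul_bwdDiff_iter (p : ℝ[X]) {m : ℕ}
    (hp : p.natDegree ≤ m + 1) (T x : ℝ) (i : ℕ) :
    T ^ i * iteratedDeriv i p.eval x -
        ∑ j ∈ range (m + 1), ired_c i j * (bwdDiff T)^[j] p.eval x =
      ired_c i (m + 1) * (T ^ (m + 1) * iteratedDeriv (m + 1) p.eval x) := by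
  have hexact := p.pow_mul_iteratedDeriv_eq_sum_ired_c_mul_bwdDiff_iter hp T x
  have htop := hexact (m + 1)
  rw [sum_range_succ, sum_eq_zero fun j hj => by rw [ired_c_of_lt (mem_range.1 hj), zero_mul],
    zero_add, ired_c_self, one_mul] at htop
  rw [hexact, sum_range_succ, htop, add_sub_cancel_left]

lemma pow_mul_sum_Icc_pow_mul_ired_c {i m : ℕ} (T : ℝ) (a : ℕ → ℝ) :
    T ^ i * ∑ j ∈ Icc i m, T ^ (j - i) * ired_c i j * a j =
      ∑ j ∈ range (m + 1), ired_c i j * (T ^ j * a j) := by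
  rw [mul_sum, ← sum_subset (s₁ := Icc i m) (s₂ := range (m + 1))
    (fun j hj => by simp at hj ⊢; omega)
    fun j hjm hj => by rw [ired_c_of_lt (by simp at hjm hj; omega), zero_mul]]
  refine sum_congr rfl fun j hj => ?_
  rw [← Nat.add_sub_cancel' (mem_Icc.1 hj).1, pow_add, Nat.add_sub_cancel_left]
  ring

lemma bwdDiff_iter_eq_pow_mul_of_divDiff {f : ℝ → ℝ} {g : ℕ → ℤ → ℝ} {T : ℝ} (hT : T ≠ 0)
    {N : ℕ} (hg1 : ∀ k : ℤ, g 1 (k + 1) = f ((k : ℝ) * T))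
    (hgi : ∀ i : ℕ, 1 ≤ i → i ≤ N → ∀ k : ℤ, g (i + 1) (k + 1) = (g i (k + 1) - g i k) / T) :
    ∀ j ≤ N, ∀ k : ℤ, (bwdDiff T)^[j] f (k * T) = T ^ j * g (j + 1) (k + 1) := by
  intro j
  induction j with
  | zero => simp [hg1]
  | succ j ih =>
    intro hj k
    have hprev := ih (by omega) (k - 1)
    rw [sub_add_cancel, Int.cast_sub, Int.cast_one, sub_one_mul] at hprev
    rw [Function.iterate_succ_apply', bwdDiff, ih (by omega), hprev, hgi (j + 1) (by omega) hj]
    field_simp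
    ring

theorem stmt12_general (m : ℕ) (M T : ℝ) (hM : 0 ≤ M) (hT : 0 < T)
    (f : ℝ → ℝ) (hf : ∀ t : ℝ, f t = M * t ^ (m + 1) / ((m + 1).factorial : ℝ))
    (g : ℕ → ℤ → ℝ)
    (hg1 : ∀ k : ℤ, g 1 (k + 1) = f ((k : ℝ) * T))
    (hgi : ∀ i : ℕ, 1 ≤ i → i ≤ m + 1 → ∀ k : ℤ,
      g (i + 1) (k + 1) = (g i (k + 1) - g i k) / T) :
    ∀ k : ℕ, m ≤ k → ∀ i, 1 ≤ i → i ≤ m →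
      |iteratedDeriv i f ((k : ℝ) * T)
          - ∑ j ∈ Finset.Icc i m, T ^ (j - i) * ired_c i j * g (j + 1) ((k : ℤ) + 1)|
        = ired_c i (m + 1) * M * T ^ (m + 1 - i) := by
  intro k _ i _ him
  set p : ℝ[X] := C (M / (m + 1)!) * X ^ (m + 1)
  have hfp : f = p.eval := funext fun t => by simp [p, hf]; ring
  have hderiv : iteratedDeriv (m + 1) f (k * T) = M := by
    have : ((m + 1)! : ℝ) ≠ 0 := Nat.cast_ne_zero.2 (Nat.factorial_ne_zero _)
    simp only [hfp, p, eval_mul, eval_C, eval_pow, eval_X, iteratedDeriv_const_mul_field,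
      iteratedDeriv_pow, Nat.descFactorial_self, Nat.sub_self, pow_zero, mul_one]
    field_simp
  have hdiv (j : ℕ) (hj : j ∈ range (m + 1)) : ired_c i j * (bwdDiff T)^[j] f (k * T) =
      ired_c i j * (T ^ j * g (j + 1) ((k : ℤ) + 1)) := congrArg (ired_c i j * ·) <| by
    simpa using bwdDiff_iter_eq_pow_mul_of_divDiff hT.ne' hg1 hgi j (by simp at hj; omega) k
  have herror := p.pow_mul_iteratedDeriv_sub_sum_ired_c_mul_bwdDiff_iter
    (natDegree_C_mul_X_pow_le _ _) T (k * T) i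
  rw [← hfp, hderiv, sum_congr rfl hdiv, ← pow_mul_sum_Icc_pow_mul_ired_c, ← mul_sub,
    ← pow_mul_pow_sub T (by omega : i ≤ m + 1)] at herror
  have := ired_c_nonneg i (m + 1)
  rw [mul_left_cancel₀ (pow_ne_zero i hT.ne')
    (herror.trans (by ring) : _ = T ^ i * (ired_c i (m + 1) * M * T ^ (m + 1 - i))),
    abs_of_nonneg (by positivity)]

theorem stmt12 (m : ℕ) (hm : 1 ≤ m) (M T : ℝ) (hM : 0 ≤ M) (hT : 0 < T)
    (f : ℝ → ℝ) (hf : ∀ t : ℝ, f t = M * t ^ (m + 1) / ((m + 1).factorial : ℝ))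
    (g : ℕ → ℤ → ℝ)
    (hg1 : ∀ k : ℤ, g 1 (k + 1) = f ((k : ℝ) * T))
    (hgi : ∀ i : ℕ, 1 ≤ i → i ≤ m + 1 → ∀ k : ℤ,
      g (i + 1) (k + 1) = (g i (k + 1) - g i k) / T) :
    ∀ k : ℕ, m ≤ k → ∀ i, 1 ≤ i → i ≤ m →
      |iteratedDeriv i f ((k : ℝ) * T)
          - ∑ j ∈ Finset.Icc i m, T ^ (j - i) * ired_c i j * g (j + 1) ((k : ℤ) + 1)|
        = ired_c i (m + 1) * M * T ^ (m + 1 - i) :=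
  stmt12_general m M T hM hT f hf g hg1 hgi
end

section
/- Under the hypotheses of the recursive Lyapunov construction (β_1=1, γ_1=2, α_{j+1}γ_j^j ∈ (1,2), β_{j+1} = (β_j^j+α_{j+1})^{1/j}, γ_{j+1} = (2γ_j^j/(2−α_{j+1}γ_j^j))^{1/j}), the function V_n: ℝⁿ → ℝ defined by V_1(ξ)=|ξ_1|, V_j(ξ) = max{V_{j−1}(ξ), α_j^{−1/(j−1)}|⌈ξ_j⌋^{(j−1)/j} − ξ_{j−1}|^{1/(j−1)}} is positive definite: V_n(ξ) = 0 if and only if ξ = 0, and V_n(ξ) > 0 otherwise; moreover V_n is radially unbounded. -/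
/-- Recursively constructed Lyapunov function candidates. -/
noncomputable def lyapV (α : ℕ → ℝ) : ℕ → (ℕ → ℝ) → ℝ
  | 0, _ => 0
  | 1, ξ => |ξ 1|
  | r + 2, ξ =>
    max (lyapV α (r + 1) ξ)
      ((α (r + 2)) ^ (-(1 : ℝ) / ((r : ℝ) + 1)) *
        |spow (((r : ℝ) + 1) / ((r : ℝ) + 2)) (ξ (r + 2)) - ξ (r + 1)| ^ ((1 : ℝ) / ((r : ℝ) + 1)))

lemma spow_zero (p : ℝ) : spow p 0 = 0 := by
  simp [spow, Real.sign_zero]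

lemma spow_eq_zero_iff (p : ℝ) (y : ℝ) : spow p y = 0 ↔ y = 0 := by
  constructor
  · intro h
    by_contra hy
    have h1 : (0:ℝ) < |y| ^ p := Real.rpow_pos_of_pos (abs_pos.2 hy) p
    rcases lt_or_gt_of_ne hy with hlt | hgt
    · rw [spow, Real.sign_of_neg hlt] at h; nlinarith
    · rw [spow, Real.sign_of_pos hgt] at h; nlinarith
  · rintro rfl; exact spow_zero p

lemma abs_spow (p : ℝ) (hp : p ≠ 0) (y : ℝ) : |spow p y| = |y| ^ p := by
  rcases eq_or_ne y 0 with rfl | hy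
  · simp [spow_zero, Real.zero_rpow hp]
  · rw [spow, abs_mul, abs_of_nonneg (Real.rpow_nonneg (abs_nonneg y) p)]
    rcases lt_or_gt_of_ne hy with hlt | hgt
    · rw [Real.sign_of_neg hlt]; simp
    · rw [Real.sign_of_pos hgt]; simp

lemma lyap_nonneg (α : ℕ → ℝ) : ∀ j ξ, 0 ≤ lyapV α j ξ := by
  intro j
  induction j using Nat.strong_induction_on with
  | _ j IH =>
    intro ξ
    match j with
    | 0 => simp [lyapV]
    | 1 => simp [lyapV, abs_nonneg]
    | r + 2 =>
      exact le_trans (IH (r+1) (by omega) ξ) (le_max_left _ _)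

lemma lyap_zero_iff (α : ℕ → ℝ) (n : ℕ) (hα : ∀ j, 2 ≤ j → j ≤ n → 0 < α j) :
    ∀ j, 1 ≤ j → j ≤ n → ∀ ξ, (lyapV α j ξ = 0 ↔ ∀ i, 1 ≤ i → i ≤ j → ξ i = 0) := by
  intro j hj
  induction j, hj using Nat.le_induction with
  | base =>
    intro _ ξ
    constructor
    · intro h i h1 h2
      have : i = 1 := le_antisymm h2 h1
      subst this
      simpa [lyapV, abs_eq_zero] using h
    · intro h
      simpa [lyapV, abs_eq_zero] using h 1 le_rfl le_rfl
  | succ j hj IH =>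
    intro hjn ξ
    obtain ⟨r, rfl⟩ : ∃ r, j = r + 1 := ⟨j - 1, (Nat.succ_pred_eq_of_pos hj).symm⟩
    have hjn' : r + 1 ≤ n := by omega
    have hIH := IH hjn' ξ
    have hαpos : 0 < α (r + 2) := hα (r + 2) (by omega) (by omega)
    have hcoef : 0 < (α (r + 2)) ^ (-(1 : ℝ) / ((r : ℝ) + 1)) :=
      Real.rpow_pos_of_pos hαpos _
    have hexp : (1 : ℝ) / ((r : ℝ) + 1) ≠ 0 := by positivity
    have h1 : 0 ≤ lyapV α (r + 1) ξ := lyap_nonneg α _ ξ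
    set d := |spow (((r : ℝ) + 1) / ((r : ℝ) + 2)) (ξ (r + 2)) - ξ (r + 1)| with hd
    have hdnn : 0 ≤ d := abs_nonneg _
    have h2 : (0:ℝ) ≤ (α (r + 2)) ^ (-(1 : ℝ) / ((r : ℝ) + 1)) * d ^ ((1 : ℝ) / ((r : ℝ) + 1)) :=
      mul_nonneg hcoef.le (Real.rpow_nonneg hdnn _)
    have hmax : lyapV α (r + 1 + 1) ξ = 0 ↔
        lyapV α (r + 1) ξ = 0 ∧
          (α (r + 2)) ^ (-(1 : ℝ) / ((r : ℝ) + 1)) * d ^ ((1 : ℝ) / ((r : ℝ) + 1)) = 0 := by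
      show max _ _ = 0 ↔ _
      constructor
      · intro h
        constructor
        · exact le_antisymm (h ▸ le_max_left _ _) h1
        · exact le_antisymm (h ▸ le_max_right _ _) h2
      · rintro ⟨ha, hb⟩; rw [ha, hb]; simp
    have hbzero : ((α (r + 2)) ^ (-(1 : ℝ) / ((r : ℝ) + 1)) * d ^ ((1 : ℝ) / ((r : ℝ) + 1)) = 0)
        ↔ spow (((r : ℝ) + 1) / ((r : ℝ) + 2)) (ξ (r + 2)) = ξ (r + 1) := by
      rw [mul_eq_zero]
      constructor
      · rintro (h | h)
        · exact absurd h (ne_of_gt hcoef)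
        · have hd0 : d = 0 := (Real.rpow_eq_zero hdnn hexp).1 h
          rw [hd, abs_eq_zero, sub_eq_zero] at hd0
          exact hd0
      · intro h
        right
        rw [hd, h, sub_self, abs_zero, Real.zero_rpow hexp]
    rw [hmax, hIH, hbzero]
    have hpne : (((r : ℝ) + 1) / ((r : ℝ) + 2)) ≠ 0 := by positivity
    constructor
    · rintro ⟨ha, hb⟩ i hi1 hi2
      rcases Nat.lt_or_ge i (r + 2) with h | h
      · exact ha i hi1 (by omega)
      · have : i = r + 2 := by omega
        subst this
        have : ξ (r + 1) = 0 := ha (r + 1) (by omega) le_rfl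
        rw [this] at hb
        exact (spow_eq_zero_iff _ _).1 hb
    · intro h
      refine ⟨fun i hi1 hi2 => h i hi1 (by omega), ?_⟩
      rw [h (r + 2) (by omega) le_rfl, h (r + 1) (by omega) (by omega), spow_zero]

lemma lyap_bound (α : ℕ → ℝ) (n : ℕ) (hα : ∀ j, 2 ≤ j → j ≤ n → 0 < α j) :
    ∀ j, 1 ≤ j → j ≤ n → ∀ C : ℝ, 0 ≤ C → ∃ K : ℝ, 0 ≤ K ∧
      ∀ ξ : ℕ → ℝ, lyapV α j ξ ≤ C → ∀ i, 1 ≤ i → i ≤ j → |ξ i| ≤ K := by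
  intro j hj
  induction j, hj using Nat.le_induction with
  | base =>
    intro _ C hC
    refine ⟨C, hC, fun ξ h i hi1 hi2 => ?_⟩
    have : i = 1 := le_antisymm hi2 hi1
    subst this
    simpa [lyapV] using h
  | succ j hj IH =>
    intro hjn C hC
    obtain ⟨r, rfl⟩ : ∃ r, j = r + 1 := ⟨j - 1, (Nat.succ_pred_eq_of_pos hj).symm⟩
    obtain ⟨K, hK, hKb⟩ := IH (by omega) C hC
    have hαpos : 0 < α (r + 2) := hα (r + 2) (by omega) (by omega)
    set j' : ℝ := (r : ℝ) + 1 with hj'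
    have hj'pos : 0 < j' := by positivity
    set p : ℝ := ((r : ℝ) + 1) / ((r : ℝ) + 2) with hp
    have hppos : 0 < p := by positivity
    set D : ℝ := C ^ j' * α (r + 2) + K with hD
    have hDnn : 0 ≤ D := by
      have := Real.rpow_nonneg hC j'
      positivity
    refine ⟨max K (D ^ (1 / p)), le_trans hK (le_max_left _ _), fun ξ h i hi1 hi2 => ?_⟩
    have h1 : lyapV α (r + 1) ξ ≤ C := le_trans (le_max_left _ _) h
    rcases Nat.lt_or_ge i (r + 2) with hlt | hge
    · exact le_trans (hKb ξ h1 i hi1 (by omega)) (le_max_left _ _)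
    have : i = r + 2 := by omega
    subst this
    set d := |spow p (ξ (r + 2)) - ξ (r + 1)| with hd
    have hdnn : 0 ≤ d := abs_nonneg _
    have h2 : (α (r + 2)) ^ (-(1 : ℝ) / j') * d ^ ((1 : ℝ) / j') ≤ C :=
      le_trans (le_max_right _ _) h
    -- from h2 : d ≤ C ^ j' * α (r+2)
    have hcoef : (α (r + 2)) ^ (-(1 : ℝ) / j') = ((α (r + 2)) ^ ((1 : ℝ) / j'))⁻¹ := by
      rw [neg_div, Real.rpow_neg hαpos.le]
    have hcpos : 0 < (α (r + 2)) ^ ((1 : ℝ) / j') := Real.rpow_pos_of_pos hαpos _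
    have h3 : d ^ ((1 : ℝ) / j') ≤ C * (α (r + 2)) ^ ((1 : ℝ) / j') := by
      rw [hcoef, inv_mul_le_iff₀ hcpos] at h2
      linarith [h2]
    have h4 : d ≤ C ^ j' * α (r + 2) := by
      have hstep : (d ^ ((1 : ℝ) / j')) ^ j' ≤ (C * (α (r + 2)) ^ ((1 : ℝ) / j')) ^ j' := by
        apply Real.rpow_le_rpow (Real.rpow_nonneg hdnn _) h3 hj'pos.le
      calc d = (d ^ ((1 : ℝ) / j')) ^ j' := by
              rw [← Real.rpow_mul hdnn, one_div, inv_mul_cancel₀ (ne_of_gt hj'pos),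
                Real.rpow_one]
        _ ≤ _ := hstep
        _ = C ^ j' * α (r + 2) := by
              rw [Real.mul_rpow hC hcpos.le, ← Real.rpow_mul hαpos.le, one_div,
                inv_mul_cancel₀ (ne_of_gt hj'pos), Real.rpow_one]
    have h5 : |ξ (r + 2)| ^ p ≤ D := by
      have habs : |spow p (ξ (r + 2))| ≤ d + |ξ (r + 1)| := by
        calc |spow p (ξ (r + 2))| = |(spow p (ξ (r + 2)) - ξ (r + 1)) + ξ (r + 1)| := by
              ring_nf
          _ ≤ d + |ξ (r + 1)| := abs_add_le _ _
      rw [abs_spow p (ne_of_gt hppos)] at habs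
      have := hKb ξ h1 (r + 1) (by omega) le_rfl
      rw [hD]
      linarith
    have h6 : |ξ (r + 2)| ≤ D ^ (1 / p) := by
      calc |ξ (r + 2)| = (|ξ (r + 2)| ^ p) ^ (1 / p) := by
            rw [← Real.rpow_mul (abs_nonneg _), mul_one_div, div_self (ne_of_gt hppos),
              Real.rpow_one]
        _ ≤ D ^ (1 / p) := Real.rpow_le_rpow (Real.rpow_nonneg (abs_nonneg _) _) h5 (by positivity)
    exact le_trans h6 (le_max_right _ _)

theorem stmt14 (n : ℕ) (hn : 1 ≤ n) (α β γ : ℕ → ℝ)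
    (hα : ∀ j, 2 ≤ j → j ≤ n → 0 < α j)
    (hβ1 : β 1 = 1) (hγ1 : γ 1 = 2)
    (hrec : ∀ j, 1 ≤ j → j ≤ n - 1 →
      α (j + 1) * (γ j) ^ j ∈ Set.Ioo (1 : ℝ) 2 ∧
      β (j + 1) = (β j ^ j + α (j + 1)) ^ ((1 : ℝ) / j) ∧
      γ (j + 1) = (2 * (γ j) ^ j / (2 - α (j + 1) * (γ j) ^ j)) ^ ((1 : ℝ) / j)) :
    (∀ ξ : ℕ → ℝ,
      (lyapV α n ξ = 0 ↔ ∀ i, 1 ≤ i → i ≤ n → ξ i = 0) ∧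
      ((∃ i, 1 ≤ i ∧ i ≤ n ∧ ξ i ≠ 0) → 0 < lyapV α n ξ)) ∧
    ∀ C : ℝ, ∃ R : ℝ, ∀ ξ : ℕ → ℝ,
      R ≤ Real.sqrt (∑ i ∈ Finset.Icc 1 n, (ξ i) ^ 2) → C ≤ lyapV α n ξ := by
  have hzero := lyap_zero_iff α n hα n hn le_rfl
  constructor
  · intro ξ
    refine ⟨hzero ξ, fun ⟨i, hi1, hi2, hi3⟩ => ?_⟩
    rcases lt_or_eq_of_le (lyap_nonneg α n ξ) with h | h
    · exact h
    · exact absurd ((hzero ξ).1 h.symm i hi1 hi2) hi3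
  · intro C
    obtain ⟨K, hK, hKb⟩ := lyap_bound α n hα n hn le_rfl (max C 0) (le_max_right _ _)
    refine ⟨Real.sqrt (n * K ^ 2) + 1, fun ξ hξ => ?_⟩
    by_contra hc
    push_neg at hc
    have hV : lyapV α n ξ ≤ max C 0 := le_trans hc.le (le_max_left _ _)
    have hsum : (∑ i ∈ Finset.Icc 1 n, (ξ i) ^ 2) ≤ n * K ^ 2 := by
      calc (∑ i ∈ Finset.Icc 1 n, (ξ i) ^ 2) ≤ ∑ i ∈ Finset.Icc 1 n, K ^ 2 := by
            apply Finset.sum_le_sum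
            intro i hi
            rw [Finset.mem_Icc] at hi
            have := hKb ξ hV i hi.1 hi.2
            calc (ξ i) ^ 2 = |ξ i| ^ 2 := (sq_abs _).symm
              _ ≤ K ^ 2 := by nlinarith [abs_nonneg (ξ i)]
        _ = n * K ^ 2 := by
            rw [Finset.sum_const, Nat.card_Icc]
            simp
    have : Real.sqrt (∑ i ∈ Finset.Icc 1 n, (ξ i) ^ 2) ≤ Real.sqrt (n * K ^ 2) :=
      Real.sqrt_le_sqrt hsum
    linarith
end
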